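/- arXiv:0902.0842 — 2 statements merged into one kernel-verified Lean document; each statement's English description precedes it below -/
import Mathlib

section
/- Let G be a group acting by automorphisms on a group B, and let A be a G-stable subgroup of B. Let (B/A)^G denote the set of left cosets bA fixed by G (i.e. for all s ∈ G, (s • b)A = bA), and let B^G act on (B/A)^G by left translation. Then there is a bijection between the orbit space B^G \ (B/A)^G and the set of cohomology classes in H¹(G, A) that become trivial in H¹(G, B); the bijection sends the orbit of the coset bA to the class of the cocycle s ↦ b⁻¹ * (s • b) (which takes values in A). -/
section

variable (G B : Type*) [Group G] [Group B] [MulDistribMulAction G B] (A : Subgroup B)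

/-- The set of left cosets of `A` in `B` fixed by the action of `G`. -/
def FixedCosets : Type _ :=
  {q : B ⧸ A // ∀ (s : G) (b : B), QuotientGroup.mk b = q → QuotientGroup.mk (s • b) = q}

/-- `a : G → B` is a 1-cocycle. -/
def IsCocycle (a : G → B) : Prop :=
  ∀ s t : G, a (s * t) = a s * (s • a t)

/-- Cocycles with values in `A` whose class becomes trivial in `H¹(G, B)`. -/
def CocyclesTrivB : Type _ :=
  {a : G → B // IsCocycle G B a ∧ (∀ s : G, a s ∈ A) ∧ ∃ b : B, ∀ s : G, a s = b⁻¹ * (s • b)}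

/-- The orbit relation of `B^G` acting by left translation on the fixed cosets. -/
def orbitRel (x y : FixedCosets G B A) : Prop :=
  ∃ b : B, (∀ s : G, s • b = b) ∧
    ∀ c : B, QuotientGroup.mk c = x.1 → QuotientGroup.mk (b * c) = y.1

/-- The cohomologous relation (via an element of `A`) on cocycles. -/
def cohRel (a a' : CocyclesTrivB G B A) : Prop :=
  ∃ c ∈ A, ∀ s : G, a'.1 s = c⁻¹ * a.1 s * (s • c)

namespace Stmt13Aux

variable {G B A}

lemma cocOf_mem (x : FixedCosets G B A) (b : B) (hb : QuotientGroup.mk b = x.1) (s : G) :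
    b⁻¹ * (s • b) ∈ A := by
  have h := x.2 s b hb
  rw [← hb] at h
  exact QuotientGroup.eq.mp h.symm

/-- The cocycle attached to a fixed coset with representative `b`. -/
def cocOf (x : FixedCosets G B A) (b : B) (hb : QuotientGroup.mk b = x.1) :
    CocyclesTrivB G B A :=
  ⟨fun s => b⁻¹ * (s • b),
   fun s t => by simp [mul_smul, smul_mul', smul_inv', mul_assoc],
   cocOf_mem x b hb, b, fun s => rfl⟩

lemma cohRel_of_eq (y y' : CocyclesTrivB G B A) (b b' : B)
    (hy : ∀ s, y.1 s = b⁻¹ * s • b) (hy' : ∀ s, y'.1 s = b'⁻¹ * s • b')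
    (h : b⁻¹ * b' ∈ A) : cohRel G B A y y' :=
  ⟨b⁻¹ * b', h, fun s => by
    rw [hy, hy', smul_mul', smul_inv']
    group⟩

lemma orbitRel_of (x x' : FixedCosets G B A) (b b' : B)
    (hx : QuotientGroup.mk b = x.1) (hx' : QuotientGroup.mk b' = x'.1)
    (h : ∀ s : G, b⁻¹ * s • b = b'⁻¹ * s • b') : orbitRel G B A x x' := by
  refine ⟨b' * b⁻¹, fun s => ?_, fun c hc => ?_⟩
  · have hs := h s
    have h1 : s • b = b * (b⁻¹ * s • b) := by group
    have h2 : s • b' = b' * (b'⁻¹ * s • b') := by group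
    rw [smul_mul', smul_inv', h1, h2, hs]
    group
  · rw [← hx'] at *
    rw [← hx] at hc
    have h1 : c⁻¹ * b ∈ A := QuotientGroup.eq.mp hc
    have : (b' * b⁻¹ * c)⁻¹ * b' = c⁻¹ * b := by group
    exact QuotientGroup.eq.mpr (this ▸ h1)

/-- Coset attached to a cocycle trivialized by `b`. -/
def cosOf (hA : ∀ (s : G), ∀ x ∈ A, s • x ∈ A) (y : CocyclesTrivB G B A) (b : B)
    (hb : ∀ s, y.1 s = b⁻¹ * s • b) : FixedCosets G B A :=
  ⟨QuotientGroup.mk b, by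
    intro s c hc
    have hd : c⁻¹ * b ∈ A := QuotientGroup.eq.mp hc
    refine QuotientGroup.eq.mpr ?_
    have hmem : y.1 s ∈ A := y.2.2.1 s
    rw [hb s] at hmem
    have hc' : c = b * (c⁻¹ * b)⁻¹ := by group
    have key : (s • c)⁻¹ * b = (s • (c⁻¹ * b)⁻¹)⁻¹ * ((b⁻¹ * s • b)⁻¹) := by
      rw [hc', smul_mul']
      group
    rw [key]
    exact A.mul_mem (A.inv_mem (hA s _ (A.inv_mem hd))) (A.inv_mem hmem)⟩

noncomputable def fwdAux (x : FixedCosets G B A) : CocyclesTrivB G B A :=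
  cocOf x (QuotientGroup.mk_surjective x.1).choose (QuotientGroup.mk_surjective x.1).choose_spec

lemma fwdAux_spec (x : FixedCosets G B A) :
    QuotientGroup.mk (QuotientGroup.mk_surjective x.1).choose = x.1 ∧
    ∀ s : G, (fwdAux x).1 s = (QuotientGroup.mk_surjective x.1).choose⁻¹ *
      s • (QuotientGroup.mk_surjective x.1).choose :=
  ⟨(QuotientGroup.mk_surjective x.1).choose_spec, fun _ => rfl⟩

noncomputable def bwdAux (hA : ∀ (s : G), ∀ x ∈ A, s • x ∈ A) (y : CocyclesTrivB G B A) :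
    FixedCosets G B A :=
  cosOf hA y y.2.2.2.choose y.2.2.2.choose_spec

end Stmt13Aux

/-- The orbit space of `B^G` acting on the `G`-fixed cosets of `B/A` is in bijection
with the set of classes in `H¹(G, A)` that become trivial in `H¹(G, B)`; the bijection
sends the orbit of the coset `bA` to the class of the cocycle `s ↦ b⁻¹ * (s • b)`. -/
theorem stmt_13 (hA : ∀ (s : G), ∀ x ∈ A, s • x ∈ A) :
    ∃ F : Quot (orbitRel G B A) ≃ Quot (cohRel G B A),
      ∀ (x : FixedCosets G B A) (b : B), x.1 = QuotientGroup.mk b →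
        ∀ y : CocyclesTrivB G B A, (∀ s : G, y.1 s = b⁻¹ * (s • b)) →
          F (Quot.mk _ x) = Quot.mk _ y := by
  classical
  open Stmt13Aux in
  -- forward map respects orbitRel
  have hfwd : ∀ x x' : FixedCosets G B A, orbitRel G B A x x' →
      (Quot.mk (cohRel G B A) (fwdAux x)) = Quot.mk _ (fwdAux x') := by
    intro x x' ⟨b0, hb0, htr⟩
    set b := (QuotientGroup.mk_surjective x.1).choose with hbdef
    set b' := (QuotientGroup.mk_surjective x'.1).choose with hb'def
    have hb : QuotientGroup.mk b = x.1 := (QuotientGroup.mk_surjective x.1).choose_spec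
    have hb' : QuotientGroup.mk b' = x'.1 := (QuotientGroup.mk_surjective x'.1).choose_spec
    have h1 : QuotientGroup.mk (b0 * b) = x'.1 := htr b hb
    have hc : (b0 * b)⁻¹ * b' ∈ A := QuotientGroup.eq.mp (h1.trans hb'.symm)
    refine Quot.sound (cohRel_of_eq (fwdAux x) (fwdAux x') (b0 * b) b' ?_ (fun s => rfl) hc)
    intro s
    show b⁻¹ * s • b = (b0 * b)⁻¹ * s • (b0 * b)
    rw [smul_mul', hb0 s]
    group
  have hbwd : ∀ y y' : CocyclesTrivB G B A, cohRel G B A y y' →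
      (Quot.mk (orbitRel G B A) (bwdAux hA y)) = Quot.mk _ (bwdAux hA y') := by
    intro y y' ⟨c, hcA, hcoh⟩
    set b := y.2.2.2.choose with hbdef
    set b' := y'.2.2.2.choose with hb'def
    have hb : ∀ s, y.1 s = b⁻¹ * s • b := y.2.2.2.choose_spec
    have hb' : ∀ s, y'.1 s = b'⁻¹ * s • b' := y'.2.2.2.choose_spec
    refine Quot.sound (orbitRel_of (bwdAux hA y) (bwdAux hA y') (b * c) b' ?_ rfl ?_)
    · show QuotientGroup.mk (b * c) = QuotientGroup.mk b
      refine QuotientGroup.eq.mpr ?_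
      have he : (b * c)⁻¹ * b = c⁻¹ := by group
      rw [he]; exact A.inv_mem hcA
    · intro s
      rw [← hb' s, hcoh s, hb s, smul_mul']
      group
  refine ⟨⟨Quot.lift (fun x => Quot.mk _ (fwdAux x)) hfwd,
          Quot.lift (fun y => Quot.mk _ (bwdAux hA y)) hbwd, ?_, ?_⟩, ?_⟩
  · refine Quot.ind (fun x => ?_)
    show Quot.mk _ (bwdAux hA (fwdAux x)) = Quot.mk _ x
    set a := fwdAux x with hadef
    set b := (QuotientGroup.mk_surjective x.1).choose with hbdef
    have hb : QuotientGroup.mk b = x.1 := (QuotientGroup.mk_surjective x.1).choose_spec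
    have ha : ∀ s : G, a.1 s = b⁻¹ * s • b := fun _ => rfl
    set b'' := a.2.2.2.choose with hb''def
    have hb'' : ∀ s, a.1 s = b''⁻¹ * s • b'' := a.2.2.2.choose_spec
    refine (Quot.sound (orbitRel_of x (bwdAux hA a) b b'' hb rfl (fun s => ?_))).symm
    rw [← ha s, hb'' s]
  · refine Quot.ind (fun y => ?_)
    show Quot.mk _ (fwdAux (bwdAux hA y)) = Quot.mk _ y
    set b := y.2.2.2.choose with hbdef
    have hb : ∀ s, y.1 s = b⁻¹ * s • b := y.2.2.2.choose_spec
    set b'' := (QuotientGroup.mk_surjective (bwdAux hA y).1).choose with hb''def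
    have hb'' : QuotientGroup.mk b'' = (bwdAux hA y).1 :=
      (QuotientGroup.mk_surjective (bwdAux hA y).1).choose_spec
    have hcos : (bwdAux hA y).1 = QuotientGroup.mk b := rfl
    have hc : b⁻¹ * b'' ∈ A := by
      rw [hcos] at hb''
      exact QuotientGroup.eq.mp hb''.symm
    exact (Quot.sound (cohRel_of_eq y (fwdAux (bwdAux hA y)) b b'' hb (fun _ => rfl) hc)).symm
  · intro x b hxb y hy
    show Quot.mk _ (fwdAux x) = Quot.mk _ y
    set b'' := (QuotientGroup.mk_surjective x.1).choose with hb''def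
    have hb'' : QuotientGroup.mk b'' = x.1 := (QuotientGroup.mk_surjective x.1).choose_spec
    have hc : b⁻¹ * b'' ∈ A := QuotientGroup.eq.mp (hb''.trans hxb).symm
    exact (Quot.sound (cohRel_of_eq y (fwdAux x) b b'' hy (fun _ => rfl) hc)).symm

end
end

section
/- Let Γ be a linearly ordered set, n a positive integer, and f : Fin n → Γ any function. Then f is uniquely determined by the pair consisting of (a) its image (a finite subset of Γ of size ≤ n) and (b) the pullback preorder on Fin n defined by i ≼ j ↔ f(i) ≤ f(j). That is, if f, g : Fin n → Γ have the same image and induce the same preorder on Fin n, then f = g. -/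
/-- A function `f : Fin n → Γ` into a linear order is determined by its image together
with the pullback preorder `i ≼ j ↔ f i ≤ f j`. -/
theorem stmt_17 (n : ℕ) (hn : 0 < n) (Γ : Type*) [LinearOrder Γ]
    (f g : Fin n → Γ) (hr : Set.range f = Set.range g)
    (ho : ∀ i j : Fin n, f i ≤ f j ↔ g i ≤ g j) : f = g := by
  have key : ∀ (f g : Fin n → Γ), Set.range f = Set.range g →
      (∀ i j : Fin n, f i ≤ f j ↔ g i ≤ g j) → ∀ i, f i ≤ g i := by
    intro f g hr ho i
    by_contra h
    push_neg at h
    -- h : g i < f i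
    have heq : ∀ j j' : Fin n, f j = f j' ↔ g j = g j' := by
      intro j j'
      constructor
      · intro hjj
        exact le_antisymm ((ho j j').mp hjj.le) ((ho j' j).mp hjj.ge)
      · intro hjj
        exact le_antisymm ((ho j j').mpr hjj.le) ((ho j' j).mpr hjj.ge)
    set S : Finset (Fin n) := Finset.univ.filter (fun j => f j ≤ f i) with hS
    have hmemS : ∀ j, j ∈ S ↔ f j ≤ f i := by
      intro j; simp [hS]
    have hR : Finset.image f Finset.univ = Finset.image g Finset.univ := by
      apply Finset.coe_injective
      simpa [Set.image_univ] using hr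
    set A := S.image f with hA
    set B := S.image g with hB
    have hcard : A.card = B.card := by
      apply Finset.card_bij (fun a ha => g (Finset.mem_image.mp ha).choose)
      · intro a ha
        have hc := (Finset.mem_image.mp ha).choose_spec
        exact Finset.mem_image.mpr ⟨_, hc.1, rfl⟩
      · intro a ha a' ha' hgg
        have hc := (Finset.mem_image.mp ha).choose_spec
        have hc' := (Finset.mem_image.mp ha').choose_spec
        rw [← hc.2, ← hc'.2]
        exact (heq _ _).mpr hgg
      · intro b hb
        obtain ⟨j, hj, hjb⟩ := Finset.mem_image.mp hb
        have haf : f j ∈ A := Finset.mem_image.mpr ⟨j, hj, rfl⟩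
        refine ⟨f j, haf, ?_⟩
        have hc := (Finset.mem_image.mp haf).choose_spec
        rw [← hjb]
        exact (heq _ _).mp hc.2
    have hBA : B ⊆ A := by
      intro x hx
      obtain ⟨j, hj, hjx⟩ := Finset.mem_image.mp hx
      have hxle : x ≤ g i := by
        rw [← hjx]; exact (ho j i).mp ((hmemS j).mp hj)
      have hxR : x ∈ Finset.image f Finset.univ := by
        rw [hR, ← hjx]; exact Finset.mem_image.mpr ⟨j, Finset.mem_univ j, rfl⟩
      obtain ⟨k, _, hkx⟩ := Finset.mem_image.mp hxR
      have : k ∈ S := (hmemS k).mpr (by rw [hkx]; exact hxle.trans h.le)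
      exact Finset.mem_image.mpr ⟨k, this, hkx⟩
    have hfiA : f i ∈ A := Finset.mem_image.mpr ⟨i, (hmemS i).mpr le_rfl, rfl⟩
    have hfiB : f i ∉ B := by
      intro hx
      obtain ⟨j, hj, hjx⟩ := Finset.mem_image.mp hx
      have : f i ≤ g i := by rw [← hjx]; exact (ho j i).mp ((hmemS j).mp hj)
      exact absurd this (not_le.mpr h)
    have : B ⊂ A := ⟨hBA, fun hAB => hfiB (hAB hfiA)⟩
    exact absurd hcard.symm (Nat.ne_of_lt (Finset.card_lt_card this))
  funext i
  exact le_antisymm (key f g hr ho i) (key g f hr.symm (fun i j => (ho i j).symm) i)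
end
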